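/- arXiv:2206.14749 — 2 statements merged into one kernel-verified Lean document; each statement's English description precedes it below -/
import Mathlib

section
/- With v_0 = 2/w_0 - 1 and v_k = -2 w_k / w_0 for k ≠ 0, where w_k ≥ 0 is symmetric with Σ_k w_k = 1 and w_0 > 0, every entry of the discrete Fourier transform of v satisfies V_n = 1 + Σ_{k=1}^{K} (4 w_k / w_0)(1 - cos(2πkn/N)) ≥ 1; in particular V_n ≠ 0 for all n. -/
open Finset Real Complex

/-!
Pairing the terms `k` and `-k` turns the DFT of the symmetric sequence `v` into the cosine sum
`v₀ + Σ_{k ≥ 1} 2 v_k cos(2πkn/N)`. Since `w₀ + 2 Σ_{k ≥ 1} w_k = 1`, the constant `2/w₀ - 1`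
equals `1 + Σ_{k ≥ 1} 4 w_k / w₀`, so every summand becomes the nonnegative `(4 w_k / w₀)(1 - cos)`.
-/

theorem Finset.sum_Icc_neg_eq_add_sum_Icc_one {M : Type*} [AddCommMonoid M] (f : ℤ → M) (N : ℕ) :
    ∑ k ∈ Icc (-N : ℤ) N, f k = f 0 + ∑ k ∈ Icc (1 : ℤ) N, (f k + f (-k)) := by
  induction N with
  | zero => simp
  | succ N ih =>
    rw [Nat.cast_succ, Icc_succ_succ, sum_union (by simp), sum_pair (by lia), ih,
      ← insert_Icc_right_eq_Icc_add_one (by lia), sum_insert (by simp)]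
    abel

theorem sum_Icc_mul_exp_eq_of_symm (v : ℤ → ℝ) (N : ℕ)
    (hv : ∀ k ∈ Icc (1 : ℤ) N, v (-k) = v k) (θ : ℝ) :
    ∑ k ∈ Icc (-N : ℤ) N, (v k : ℂ) * exp (-(k * θ) * I)
      = ((v 0 + ∑ k ∈ Icc (1 : ℤ) N, 2 * v k * Real.cos (k * θ) : ℝ) : ℂ) := by
  rw [sum_Icc_neg_eq_add_sum_Icc_one]
  push_cast
  congr 1
  · simp
  refine sum_congr rfl fun k hk => ?_
  rw [hv k hk, mul_right_comm, two_cos]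
  ring_nf

theorem add_two_mul_sum_Icc_one_eq_one_of_symm (w : ℤ → ℝ) (N : ℕ)
    (hsym : ∀ k ∈ Icc (-N : ℤ) N, w k = w (-k)) (hsum : ∑ k ∈ Icc (-N : ℤ) N, w k = 1) :
    w 0 + 2 * ∑ k ∈ Icc (1 : ℤ) N, w k = 1 := by
  rw [← hsum, sum_Icc_neg_eq_add_sum_Icc_one, two_mul, ← sum_add_distrib]
  congr 1
  refine sum_congr rfl fun k hk => ?_
  rw [← hsym k (by simp only [mem_Icc] at hk ⊢; lia)]

theorem two_div_sub_one_add_sum_eq_one_add_sum (s : Finset ℤ) (a : ℝ) (w c : ℤ → ℝ) (ha : a ≠ 0)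
    (hw : a + 2 * ∑ k ∈ s, w k = 1) :
    2 / a - 1 + ∑ k ∈ s, 2 * (-(2 * w k) / a) * c k = 1 + ∑ k ∈ s, 4 * w k / a * (1 - c k) := by
  have hsplit : ∑ k ∈ s, 2 * (-(2 * w k) / a) * c k
      = ∑ k ∈ s, 4 * w k / a * (1 - c k) - 4 / a * ∑ k ∈ s, w k := by
    rw [mul_sum, ← sum_sub_distrib]
    exact sum_congr rfl fun k _ => by ring
  rw [hsplit]
  field_simp
  linear_combination -2 * hw

/-- Closed real form and lower bound for the DFT of the AR filter `v`. -/
theorem stmt3 (K : ℕ) (w : ℤ → ℝ)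
    (hw : ∀ k ∈ Icc (-(K : ℤ)) (K : ℤ), 0 ≤ w k)
    (hsym : ∀ k ∈ Icc (-(K : ℤ)) (K : ℤ), w k = w (-k))
    (hsum : ∑ k ∈ Icc (-(K : ℤ)) (K : ℤ), w k = 1)
    (hw0 : 0 < w 0)
    (v : ℤ → ℝ)
    (hv : ∀ k ∈ Icc (-(K : ℤ)) (K : ℤ),
      v k = if k = 0 then 2 / w 0 - 1 else -(2 * w k) / w 0)
    (V : ℤ → ℂ)
    (hV : ∀ n : ℤ, V n = ∑ k ∈ Icc (-(K : ℤ)) (K : ℤ),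
      (v k : ℂ) * Complex.exp (-(2 * Real.pi * Complex.I * k * n) / (2 * K + 1)))
    (n : ℤ) :
    V n = ((1 + ∑ k ∈ Icc (1 : ℤ) (K : ℤ),
        (4 * w k / w 0) * (1 - Real.cos (2 * Real.pi * k * n / (2 * K + 1))) : ℝ) : ℂ)
    ∧ (1 : ℝ) ≤ 1 + ∑ k ∈ Icc (1 : ℤ) (K : ℤ),
        (4 * w k / w 0) * (1 - Real.cos (2 * Real.pi * k * n / (2 * K + 1)))
    ∧ V n ≠ 0 := by
  have hmem : ∀ k ∈ Icc (1 : ℤ) K, k ∈ Icc (-(K : ℤ)) K ∧ -k ∈ Icc (-(K : ℤ)) K ∧ k ≠ 0 := by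
    intro k hk
    simp only [mem_Icc] at hk ⊢
    lia
  have hv_pos : ∀ k ∈ Icc (1 : ℤ) K, v k = -(2 * w k) / w 0 ∧ v (-k) = v k := by
    intro k hk
    obtain ⟨hk, hnk, hk0⟩ := hmem k hk
    rw [hv k hk, hv (-k) hnk, ← hsym k hk]
    simp [hk0]
  set θ : ℝ := 2 * π * n / (2 * K + 1)
  have hVn : V n = ((v 0 + ∑ k ∈ Icc (1 : ℤ) K, 2 * v k * Real.cos (k * θ) : ℝ) : ℂ) := by
    rw [hV, ← sum_Icc_mul_exp_eq_of_symm v K (fun k hk => (hv_pos k hk).2) θ]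
    refine sum_congr rfl fun k _ => ?_
    simp only [θ]
    push_cast
    ring_nf
  have hreal : v 0 + ∑ k ∈ Icc (1 : ℤ) K, 2 * v k * Real.cos (k * θ)
      = 1 + ∑ k ∈ Icc (1 : ℤ) K, 4 * w k / w 0 * (1 - Real.cos (2 * π * k * n / (2 * K + 1))) := by
    rw [hv 0 (by simp), if_pos rfl, ← two_div_sub_one_add_sum_eq_one_add_sum _ _ w _ hw0.ne'
      (add_two_mul_sum_Icc_one_eq_one_of_symm w K hsym hsum)]
    refine congrArg _ (sum_congr rfl fun k hk => ?_)
    rw [(hv_pos k hk).1, show (k : ℝ) * θ = 2 * π * k * n / (2 * K + 1) by simp only [θ]; ring]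
  have hnonneg :
      0 ≤ ∑ k ∈ Icc (1 : ℤ) K, 4 * w k / w 0 * (1 - Real.cos (2 * π * k * n / (2 * K + 1))) :=
    sum_nonneg fun k hk => mul_nonneg
      (div_nonneg (mul_nonneg zero_le_four (hw k (hmem k hk).1)) hw0.le)
      (sub_nonneg.2 (Real.cos_le_one _))
  refine ⟨hVn.trans (congrArg _ hreal), by linarith, ?_⟩
  rw [hVn, hreal]
  exact ofReal_ne_zero.2 (by linarith)
end

section
/- The circular convolution operator x ↦ v ⊛ x on ℝ^N, with v defined by v_0 = 2/w_0 - 1 and v_k = -2 w_k / w_0 (w_k ≥ 0 symmetric, Σ w_k = 1, w_0 > 0), is invertible; hence the deconvolution (solution x of v ⊛ x = ȳ) exists and is unique. -/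
/-!
Writing `W` for convolution with the weights `w`, the filter `v` satisfies
`v ⊛ x = (2 / w₀) • ((1 + w₀ / 2) • x - W x)`. Since `w` is a probability vector, `W` does not
increase the sup norm, so `W x = c • x` with `|c| > 1` forces `x = 0` (look at a point where `|x|`
is maximal). Hence `x ↦ v ⊛ x` is an injective, and therefore bijective, linear endomorphism of
the finite-dimensional space `ZMod N → ℝ`.
-/

open Finset

section ShiftConv

variable {κ G : Type*} [Add G]

def shiftConv (s : Finset κ) (v : κ → ℝ) (e : κ → G) : (G → ℝ) →ₗ[ℝ] (G → ℝ) where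
  toFun x n := ∑ k ∈ s, v k * x (n + e k)
  map_add' x y := by
    funext n
    simp only [Pi.add_apply, mul_add, sum_add_distrib]
  map_smul' c x := by
    funext n
    simp only [Pi.smul_apply, smul_eq_mul, RingHom.id_apply, mul_sum]
    exact sum_congr rfl fun k _ => mul_left_comm _ _ _

theorem shiftConv_apply (s : Finset κ) (v : κ → ℝ) (e : κ → G) (x : G → ℝ) (n : G) :
    shiftConv s v e x n = ∑ k ∈ s, v k * x (n + e k) := rfl

theorem abs_shiftConv_le {s : Finset κ} {w : κ → ℝ} (hw : ∀ k ∈ s, 0 ≤ w k)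
    (hsum : ∑ k ∈ s, w k = 1) (e : κ → G) {x : G → ℝ} {M : ℝ} (hx : ∀ m, |x m| ≤ M) (n : G) :
    |shiftConv s w e x n| ≤ M :=
  calc |∑ k ∈ s, w k * x (n + e k)|
      ≤ ∑ k ∈ s, |w k * x (n + e k)| := abs_sum_le_sum_abs _ _
    _ ≤ ∑ k ∈ s, w k * M := sum_le_sum fun k hk => by
        rw [abs_mul, abs_of_nonneg (hw k hk)]
        exact mul_le_mul_of_nonneg_left (hx _) (hw k hk)
    _ = M := by rw [← sum_mul, hsum, one_mul]

theorem injective_smul_id_sub_shiftConv [Finite G] {s : Finset κ} {w : κ → ℝ}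
    (hw : ∀ k ∈ s, 0 ≤ w k) (hsum : ∑ k ∈ s, w k = 1) (e : κ → G) {c : ℝ} (hc : 1 < |c|) :
    Function.Injective (c • LinearMap.id (R := ℝ) (M := G → ℝ) - shiftConv s w e) := by
  rw [← LinearMap.ker_eq_bot, LinearMap.ker_eq_bot']
  intro x hx
  have hfix : ∀ n, c * x n = shiftConv s w e x n := fun n => by
    simpa [sub_eq_zero] using congrFun hx n
  rcases isEmpty_or_nonempty G with _ | _
  · exact Subsingleton.elim _ _
  obtain ⟨n₀, hn₀⟩ := Finite.exists_max fun n => |x n|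
  have hmax : |c| * |x n₀| ≤ |x n₀| := by
    rw [← abs_mul, hfix]
    exact abs_shiftConv_le hw hsum e hn₀ n₀
  have hx₀ : |x n₀| = 0 := by nlinarith [abs_nonneg (x n₀)]
  funext n
  exact abs_nonpos_iff.mp (hx₀ ▸ hn₀ n)

end ShiftConv

theorem shiftConv_arFilter_eq {G : Type*} [AddGroupWithOne G] {s : Finset ℤ} (hs : 0 ∈ s)
    {w v : ℤ → ℝ} (hw0 : w 0 ≠ 0)
    (hv : ∀ k ∈ s, v k = if k = 0 then 2 / w 0 - 1 else -(2 * w k) / w 0) :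
    shiftConv s v (Int.cast : ℤ → G) =
      (2 / w 0) • ((1 + w 0 / 2) • LinearMap.id - shiftConv s w Int.cast) := by
  have hv' : ∀ k ∈ s, v k = 2 / w 0 * ((if k = 0 then 1 + w 0 / 2 else 0) - w k) := by
    intro k hk
    rw [hv k hk]
    split_ifs with h
    · subst h; field_simp; ring
    · field_simp; ring
  ext x n
  simp only [shiftConv_apply, LinearMap.smul_apply, LinearMap.sub_apply, LinearMap.id_apply,
    Pi.smul_apply, Pi.sub_apply, smul_eq_mul]
  rw [sum_congr rfl fun k hk => by rw [hv' k hk]]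
  simp only [mul_assoc, ← mul_sum, sub_mul, sum_sub_distrib, ite_mul, zero_mul, sum_ite_eq',
    if_pos hs, Int.cast_zero, add_zero]

theorem stmt4_general (K : ℕ) (w : ℤ → ℝ)
    (hw : ∀ k ∈ Icc (-(K : ℤ)) (K : ℤ), 0 ≤ w k)
    (hsum : ∑ k ∈ Icc (-(K : ℤ)) (K : ℤ), w k = 1)
    (hw0 : 0 < w 0)
    (v : ℤ → ℝ)
    (hv : ∀ k ∈ Icc (-(K : ℤ)) (K : ℤ),
      v k = if k = 0 then 2 / w 0 - 1 else -(2 * w k) / w 0) :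
    Function.Bijective (fun (x : ZMod (2 * K + 1) → ℝ) (n : ZMod (2 * K + 1)) =>
      ∑ k ∈ Icc (-(K : ℤ)) (K : ℤ), v k * x (n + (k : ZMod (2 * K + 1))))
    ∧ ∀ ybar : ZMod (2 * K + 1) → ℝ,
      ∃! x : ZMod (2 * K + 1) → ℝ,
        (fun n => ∑ k ∈ Icc (-(K : ℤ)) (K : ℤ),
          v k * x (n + (k : ZMod (2 * K + 1)))) = ybar := by
  have : NeZero (2 * K + 1) := ⟨by omega⟩
  have h0 : (0 : ℤ) ∈ Icc (-(K : ℤ)) (K : ℤ) := by simp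
  have hc : 1 < |1 + w 0 / 2| := by rw [abs_of_pos (by linarith)]; linarith
  suffices hinj : Function.Injective
      (shiftConv (Icc (-(K : ℤ)) (K : ℤ)) v (Int.cast : ℤ → ZMod (2 * K + 1))) by
    have hbij : Function.Bijective _ := ⟨hinj, LinearMap.injective_iff_surjective.mp hinj⟩
    exact ⟨hbij, hbij.existsUnique⟩
  rw [shiftConv_arFilter_eq h0 hw0.ne' hv, LinearMap.coe_smul]
  exact (smul_right_injective (ZMod (2 * K + 1) → ℝ) (div_ne_zero two_ne_zero hw0.ne')).comp
    (injective_smul_id_sub_shiftConv hw hsum _ hc)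

/-- The circular convolution operator with the AR filter `v` is invertible:
deconvolution exists and is unique. -/
theorem stmt4 (K : ℕ) (w : ℤ → ℝ)
    (hw : ∀ k ∈ Icc (-(K : ℤ)) (K : ℤ), 0 ≤ w k)
    (hsym : ∀ k ∈ Icc (-(K : ℤ)) (K : ℤ), w k = w (-k))
    (hsum : ∑ k ∈ Icc (-(K : ℤ)) (K : ℤ), w k = 1)
    (hw0 : 0 < w 0)
    (v : ℤ → ℝ)
    (hv : ∀ k ∈ Icc (-(K : ℤ)) (K : ℤ),
      v k = if k = 0 then 2 / w 0 - 1 else -(2 * w k) / w 0) :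
    Function.Bijective (fun (x : ZMod (2 * K + 1) → ℝ) (n : ZMod (2 * K + 1)) =>
      ∑ k ∈ Icc (-(K : ℤ)) (K : ℤ), v k * x (n + (k : ZMod (2 * K + 1))))
    ∧ ∀ ybar : ZMod (2 * K + 1) → ℝ,
      ∃! x : ZMod (2 * K + 1) → ℝ,
        (fun n => ∑ k ∈ Icc (-(K : ℤ)) (K : ℤ),
          v k * x (n + (k : ZMod (2 * K + 1)))) = ybar :=
  stmt4_general K w hw hsum hw0 v hv
end
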